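/- Let a = (a_n, ..., a_0) be a tuple of even nonnegative integers with a_n > a_{n-1} > ... > a_0. Then v_2(∏_{0 ≤ i < j ≤ n}(a_i - a_j)) ≥ n(n+1)/2 + ∑_{k=0}^{n} v_2(k!). -/

import Mathlib

/-!
Halving every entry divides each of the `n(n+1)/2` differences by `2`, so the product is
`2 ^ (n(n+1)/2)` times the Vandermonde product of the halved tuple. That product is a
Vandermonde determinant over `ℤ`, hence divisible by the superfactorial `∏_{k ≤ n} k!`, whose
`2`-adic valuation is `∑_{k ≤ n} v₂(k!)`.
-/

open Finset

lemma sum_card_Ioi_fin (n : ℕ) : ∑ i : Fin (n + 1), #(Ioi i) = n * (n + 1) / 2 := by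
  have hreflect : ∀ i ∈ range (n + 1), n - (n + 1 - 1 - i) = i := fun i hi => by
    have := mem_range.1 hi
    omega
  simp only [Fin.card_Ioi, Nat.add_sub_cancel]
  rw [Fin.sum_univ_eq_sum_range (n - ·), ← sum_range_reflect, sum_congr rfl hreflect,
    sum_range_id, Nat.add_sub_cancel, Nat.mul_comm]

lemma prod_Ioi_mul_sub {m : ℕ} (c : ℕ) (b : Fin m → ℕ) :
    ∏ i, ∏ j ∈ Ioi i, (c * b j - c * b i) =
      c ^ (∑ i : Fin m, #(Ioi i)) * ∏ i, ∏ j ∈ Ioi i, (b j - b i) := by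
  simp_rw [← Nat.mul_sub, prod_mul_distrib, prod_const, prod_pow_eq_pow_sum]

lemma prod_Ioi_sub_ne_zero {m : ℕ} {b : Fin m → ℕ} (hb : StrictMono b) :
    ∏ i, ∏ j ∈ Ioi i, (b j - b i) ≠ 0 :=
  prod_ne_zero_iff.2 fun _ _ => prod_ne_zero_iff.2 fun _ hj =>
    Nat.sub_ne_zero_of_lt (hb (mem_Ioi.1 hj))

lemma superFactorial_dvd_prod_Ioi_sub {n : ℕ} {b : Fin (n + 1) → ℕ} (hb : Monotone b) :
    n.superFactorial ∣ ∏ i, ∏ j ∈ Ioi i, (b j - b i) := by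
  have hdvd := Matrix.superFactorial_dvd_vandermonde_det (fun i => (b i : ℤ))
  rw [Matrix.det_vandermonde] at hdvd
  rw [← Int.natCast_dvd_natCast]
  convert hdvd using 1
  push_cast
  exact prod_congr rfl fun i _ => prod_congr rfl fun j hj =>
    Nat.cast_sub (hb (mem_Ioi.1 hj).le)

lemma padicValNat_le_of_dvd {p a b : ℕ} [Fact p.Prime] (hb : b ≠ 0) (h : a ∣ b) :
    padicValNat p a ≤ padicValNat p b :=
  (padicValNat_dvd_iff_le hb).1 (pow_padicValNat_dvd.trans h)

lemma padicValNat_prod {ι : Type*} (p : ℕ) [hp : Fact p.Prime] {s : Finset ι} {f : ι → ℕ}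
    (hf : ∀ i ∈ s, f i ≠ 0) : padicValNat p (∏ i ∈ s, f i) = ∑ i ∈ s, padicValNat p (f i) := by
  simp_rw [← Nat.factorization_def _ hp.out, Nat.factorization_prod hf, Finsupp.finsetSum_apply]

lemma padicValNat_superFactorial (p : ℕ) [Fact p.Prime] (n : ℕ) :
    padicValNat p n.superFactorial = ∑ k ∈ range (n + 1), padicValNat p k.factorial := by
  rw [← Nat.prod_range_succ_factorial, padicValNat_prod p fun k _ => k.factorial_ne_zero]

/-- For a strictly descending tuple of even nonnegative integers (indexed so
that `a` is strictly increasing in the index), the `2`-adic valuation of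
`∏_{i<j} (a_j - a_i)` is at least `n(n+1)/2 + ∑_{k=0}^n v_2(k!)`. -/
theorem stmt_4 (n : ℕ) (a : Fin (n + 1) → ℕ) (ha : StrictMono a)
    (heven : ∀ i, Even (a i)) :
    n * (n + 1) / 2 + ∑ k ∈ Finset.range (n + 1), padicValNat 2 (Nat.factorial k) ≤
      padicValNat 2 (∏ i : Fin (n + 1), ∏ j ∈ Finset.Ioi i, (a j - a i)) := by
  obtain ⟨b, rfl⟩ : ∃ b : Fin (n + 1) → ℕ, a = fun i => 2 * b i :=
    ⟨fun i => a i / 2, funext fun i => (Nat.two_mul_div_two_of_even (heven i)).symm⟩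
  have hb : StrictMono b := fun i j hij => Nat.lt_of_mul_lt_mul_left (ha hij)
  have hprod := prod_Ioi_sub_ne_zero hb
  rw [prod_Ioi_mul_sub, sum_card_Ioi_fin, padicValNat.mul (pow_ne_zero _ two_ne_zero) hprod,
    padicValNat.prime_pow, ← padicValNat_superFactorial]
  exact Nat.add_le_add_left
    (padicValNat_le_of_dvd hprod (superFactorial_dvd_prod_Ioi_sub hb.monotone)) _
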